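/- arXiv:2302.06112 — 2 statements merged into one kernel-verified Lean document; each statement's English description precedes it below -/
import Mathlib

section
/- Let z ~ N(0, γ²) with γ > 0, and let m ~ Bernoulli(p) be independent of z, 0 < p < 1. Then E[(1/p) m · max(0, z)] = γ/√(2π) and Var[(1/p) m · max(0, z)] = ((π/p − 1)/(2π)) γ². -/
/-!
Write `R = max 0 z`. By independence and `m ^ 2 = m`, the dropout output `(1/p) m R` has mean
`E[R]` and second moment `E[R ^ 2] / p`, so everything reduces to two Gaussian moments of the
ReLU. The second needs no integration: `R ^ 2 + (max 0 (-z)) ^ 2 = z ^ 2` and `z` is symmetric,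
so `E[R ^ 2] = γ ^ 2 / 2`. The first is `∫₀^∞ x φ(x) dx` with `φ` the density of `z`, and
`x e^{-b x²}` has an explicit primitive; it equals `γ / √(2π)`.
-/

open MeasureTheory ProbabilityTheory

def IsBernoulli {Ω : Type*} [MeasurableSpace Ω] (μ : Measure Ω) (p : ℝ) (m : Ω → ℝ) : Prop :=
  Measurable m ∧ (∀ ω, m ω = 0 ∨ m ω = 1) ∧ μ {ω | m ω = 1} = ENNReal.ofReal p

lemma MeasureTheory.MemLp.max_zero {Ω : Type*} [MeasurableSpace Ω] {μ : Measure Ω}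
    {q : ENNReal} {f : Ω → ℝ} (hf : MemLp f q μ) : MemLp (fun ω ↦ max 0 (f ω)) q μ :=
  hf.of_le (aemeasurable_const.max hf.1.aemeasurable).aestronglyMeasurable <|
    ae_of_all _ fun ω ↦ by
      rw [Real.norm_of_nonneg (le_max_left _ _), Real.norm_eq_abs]
      exact max_le (abs_nonneg _) (le_abs_self _)

section ReLUMoments

open Real Set NNReal

theorem integral_Ioi_mul_exp_neg_mul_sq {b : ℝ} (hb : 0 < b) :
    ∫ x in Ioi (0 : ℝ), x * exp (-b * x ^ 2) = (2 * b)⁻¹ := by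
  have h := integral_mul_cexp_neg_mul_sq (b := (b : ℂ)) (by simpa using hb)
  have h' : ((∫ x in Ioi (0 : ℝ), x * exp (-b * x ^ 2) : ℝ) : ℂ) = ((2 * b)⁻¹ : ℝ) := by
    rw [← integral_complex_ofReal]
    push_cast
    exact h
  exact_mod_cast h'

lemma max_zero_sq_add_max_zero_neg_sq (x : ℝ) : max 0 x ^ 2 + max 0 (-x) ^ 2 = x ^ 2 := by
  rcases le_total 0 x with hx | hx <;> simp [hx]

theorem integral_max_zero_sq_of_map_neg_eq {ν : Measure ℝ} (hν : ν.map (fun x ↦ -x) = ν)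
    (h : Integrable (fun x ↦ x ^ 2) ν) :
    ∫ x, max 0 x ^ 2 ∂ν = (∫ x, x ^ 2 ∂ν) / 2 := by
  have hrelu : Measurable fun x : ℝ ↦ max 0 x ^ 2 := by fun_prop
  have hint : Integrable (fun x : ℝ ↦ max 0 x ^ 2) ν :=
    h.mono' hrelu.aestronglyMeasurable (ae_of_all _ fun x ↦ by
      rw [norm_pow, Real.norm_eq_abs, sq_abs]
      nlinarith [max_zero_sq_add_max_zero_neg_sq x, sq_nonneg (max 0 (-x))])
  have hneg : ∫ x, max 0 (-x) ^ 2 ∂ν = ∫ x, max 0 x ^ 2 ∂ν := by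
    conv_rhs => rw [← hν]
    rw [integral_map (by fun_prop) hrelu.aestronglyMeasurable]
  have hint_neg : Integrable (fun x : ℝ ↦ max 0 (-x) ^ 2) ν := by
    rw [← hν] at hint
    exact (integrable_map_measure hrelu.aestronglyMeasurable (by fun_prop)).1 hint
  have hsplit : ∫ x, x ^ 2 ∂ν = ∫ x, (max 0 x ^ 2 + max 0 (-x) ^ 2) ∂ν := by
    simp_rw [max_zero_sq_add_max_zero_neg_sq]
  rw [hsplit, integral_add hint hint_neg, hneg]
  ring

theorem integral_max_zero_gaussianReal (v : ℝ≥0) :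
    ∫ x, max 0 x ∂gaussianReal 0 v = √v / √(2 * π) := by
  rcases eq_or_ne v 0 with rfl | hv
  · simp [gaussianReal_zero_var]
  have hv' : (0 : ℝ) < v := by positivity
  calc ∫ x, max 0 x ∂gaussianReal 0 v
      = ∫ x, (Ioi 0).indicator (fun x ↦ gaussianPDFReal 0 v x * x) x := by
        rw [integral_gaussianReal_eq_integral_smul hv]
        congr with x
        rcases le_or_gt x 0 with hx | hx
        · simp [hx, not_lt.2 hx]
        · simp [hx, hx.le]
    _ = (√(2 * π * v))⁻¹ * ∫ x in Ioi 0, x * exp (-(2 * v : ℝ)⁻¹ * x ^ 2) := by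
        rw [integral_indicator measurableSet_Ioi, ← integral_const_mul]
        refine setIntegral_congr_fun measurableSet_Ioi fun x _ ↦ ?_
        simp only [gaussianPDFReal, sub_zero]
        ring_nf
    _ = √v / √(2 * π) := by
        rw [integral_Ioi_mul_exp_neg_mul_sq (by positivity), Real.sqrt_mul (by positivity)]
        have hsq := Real.sq_sqrt hv'.le
        have hpos : 0 < √(v : ℝ) := by positivity
        field_simp
        linarith

theorem integral_sq_gaussianReal (μ : ℝ) (v : ℝ≥0) :
    ∫ x, x ^ 2 ∂gaussianReal μ v = μ ^ 2 + v := by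
  have h := variance_eq_sub (memLp_id_gaussianReal (μ := μ) (v := v) 2)
  simp only [variance_id_gaussianReal, integral_id_gaussianReal, id_eq, Pi.pow_apply] at h
  linarith

end ReLUMoments

namespace IsBernoulli

variable {Ω : Type*} [MeasurableSpace Ω] {μ : Measure Ω} {p : ℝ} {m X : Ω → ℝ}

protected lemma measurable (hm : IsBernoulli μ p m) : Measurable m := hm.1

lemma eq_zero_or_eq_one (hm : IsBernoulli μ p m) (ω : Ω) : m ω = 0 ∨ m ω = 1 := hm.2.1 ω

lemma eq_indicator (hm : IsBernoulli μ p m) : m = (m ⁻¹' {1}).indicator 1 := by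
  funext ω
  rcases hm.eq_zero_or_eq_one ω with h | h <;> simp [h]

lemma sq_eq (hm : IsBernoulli μ p m) (ω : Ω) : m ω ^ 2 = m ω := by
  rcases hm.eq_zero_or_eq_one ω with h | h <;> simp [h]

lemma integral_eq (hm : IsBernoulli μ p m) (hp : 0 ≤ p) : ∫ ω, m ω ∂μ = p := by
  have hone : μ (m ⁻¹' {1}) = ENNReal.ofReal p := hm.2.2
  rw [hm.eq_indicator, integral_indicator_one (hm.measurable (measurableSet_singleton 1)),
    measureReal_def, hone, ENNReal.toReal_ofReal hp]

lemma integral_dropout (hm : IsBernoulli μ p m) (hp : 0 < p) (hind : IndepFun m X μ)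
    (hX : AEStronglyMeasurable X μ) :
    ∫ ω, (1 / p) * m ω * X ω ∂μ = ∫ ω, X ω ∂μ := by
  simp_rw [mul_assoc]
  rw [integral_const_mul,
    hind.integral_fun_mul_eq_mul_integral hm.measurable.aestronglyMeasurable hX,
    hm.integral_eq hp.le]
  field_simp

lemma variance_dropout [IsProbabilityMeasure μ] (hm : IsBernoulli μ p m) (hp : 0 < p)
    (hind : IndepFun m X μ) (hX : MemLp X 2 μ) :
    variance (fun ω ↦ (1 / p) * m ω * X ω) μ = (∫ ω, X ω ^ 2 ∂μ) / p - (∫ ω, X ω ∂μ) ^ 2 := by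
  have hY : MemLp (fun ω ↦ (1 / p) * m ω * X ω) 2 μ := by
    refine (hX.const_mul (1 / p)).of_le
      ((hm.measurable.aestronglyMeasurable.const_mul (1 / p)).mul hX.1) (ae_of_all _ fun ω ↦ ?_)
    rcases hm.eq_zero_or_eq_one ω with h | h
    · simp only [h, mul_zero, zero_mul, norm_zero]
      positivity
    · simp [h]
  have hsq : ∫ ω, ((1 / p) * m ω * X ω) ^ 2 ∂μ = (∫ ω, X ω ^ 2 ∂μ) / p := by
    have hind_sq : IndepFun m (fun ω ↦ X ω ^ 2) μ := hind.comp measurable_id (measurable_id.pow_const 2)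
    calc ∫ ω, ((1 / p) * m ω * X ω) ^ 2 ∂μ = (1 / p) ^ 2 * ∫ ω, m ω * X ω ^ 2 ∂μ := by
          rw [← integral_const_mul]
          congr with ω
          rw [mul_pow, mul_pow, hm.sq_eq, mul_assoc]
      _ = (∫ ω, X ω ^ 2 ∂μ) / p := by
          rw [hind_sq.integral_fun_mul_eq_mul_integral hm.measurable.aestronglyMeasurable
            (hX.aestronglyMeasurable.pow 2), hm.integral_eq hp.le]
          field_simp
  rw [variance_eq_sub hY]
  simp only [Pi.pow_apply]
  rw [hsq, hm.integral_dropout hp hind hX.aestronglyMeasurable]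

end IsBernoulli

theorem dropout_relu_gaussian_general {Ω : Type*} [MeasurableSpace Ω] (μ : Measure Ω)
    [IsProbabilityMeasure μ] (γ p : ℝ) (hγ : 0 < γ) (hp0 : 0 < p)
    (z m : Ω → ℝ) (hz : Measurable z)
    (hzlaw : Measure.map z μ = gaussianReal 0 (Real.toNNReal (γ ^ 2)))
    (hm : IsBernoulli μ p m) (hind : IndepFun m z μ) :
    (∫ ω, (1 / p) * m ω * max 0 (z ω) ∂μ) = γ / Real.sqrt (2 * Real.pi) ∧
      variance (fun ω => (1 / p) * m ω * max 0 (z ω)) μ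
        = ((Real.pi / p - 1) / (2 * Real.pi)) * γ ^ 2 := by
  have hzG : HasLaw z (gaussianReal 0 (γ ^ 2).toNNReal) μ := ⟨hz.aemeasurable, hzlaw⟩
  have hvar : ((γ ^ 2).toNNReal : ℝ) = γ ^ 2 := Real.coe_toNNReal _ (sq_nonneg γ)
  have hz2 : MemLp z 2 μ :=
    (memLp_id_gaussianReal 2).comp_measurePreserving (hzG.measurePreserving hz)
  have hR : MemLp (fun ω ↦ max 0 (z ω)) 2 μ := hz2.max_zero
  have hindR : IndepFun m (fun ω ↦ max 0 (z ω)) μ := hind.comp measurable_id (by fun_prop)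
  have hmean : ∫ ω, max 0 (z ω) ∂μ = γ / √(2 * Real.pi) := by
    rw [← Function.comp_def (fun x ↦ max 0 x), hzG.integral_comp (by fun_prop),
      integral_max_zero_gaussianReal, hvar, Real.sqrt_sq hγ.le]
  have hsecond : ∫ ω, max 0 (z ω) ^ 2 ∂μ = γ ^ 2 / 2 := by
    rw [← Function.comp_def (fun x ↦ max 0 x ^ 2), hzG.integral_comp (by fun_prop),
      integral_max_zero_sq_of_map_neg_eq (by simpa using gaussianReal_map_neg (μ := 0))
        (memLp_id_gaussianReal 2).integrable_sq, integral_sq_gaussianReal, hvar]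
    ring
  refine ⟨by rw [hm.integral_dropout hp0 hindR hR.1, hmean], ?_⟩
  rw [hm.variance_dropout hp0 hindR hR, hmean, hsecond, div_pow,
    Real.sq_sqrt (by positivity)]
  field_simp

/-- Dropout of the ReLU of a centered Gaussian: if `z ~ N(0, γ²)`, `γ > 0`, and
`m ~ Bernoulli(p)` is independent of `z` with `0 < p < 1`, then
`E[(1/p) m max(0,z)] = γ/√(2π)` and `Var[(1/p) m max(0,z)] = ((π/p − 1)/(2π)) γ²`. -/
theorem dropout_relu_gaussian {Ω : Type*} [MeasurableSpace Ω] (μ : Measure Ω)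
    [IsProbabilityMeasure μ] (γ p : ℝ) (hγ : 0 < γ) (hp0 : 0 < p) (hp1 : p < 1)
    (z m : Ω → ℝ) (hz : Measurable z)
    (hzlaw : Measure.map z μ = gaussianReal 0 (Real.toNNReal (γ ^ 2)))
    (hm : IsBernoulli μ p m) (hind : IndepFun m z μ) :
    (∫ ω, (1 / p) * m ω * max 0 (z ω) ∂μ) = γ / Real.sqrt (2 * Real.pi) ∧
      variance (fun ω => (1 / p) * m ω * max 0 (z ω)) μ
        = ((Real.pi / p - 1) / (2 * Real.pi)) * γ ^ 2 :=
  dropout_relu_gaussian_general μ γ p hγ hp0 z m hz hzlaw hm hind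
end

section
/- With the setup of PreDropout (independent masks m_j on inputs, scaled by 1/p), Var[(1/p) Σ_j m_j w_j x_j] = (1/p) Σ_j w_j² E[x_j²] + Σ_{j≠k} w_j w_k E[x_j x_k] − (Σ_j w_j E[x_j])², which exceeds the test-phase variance Var[Σ_j w_j x_j] whenever Σ_j w_j² E[x_j²] > 0 and p < 1; hence the PreDropout inconsistency ratio is < 1. -/
/-!
Independence of masks and inputs factors every moment:
`E[m_j m_k x_j x_k] = E[m_j m_k] E[x_j x_k]`, where `E[m_j m_k]` is `p` on the diagonal
(a mask satisfies `m² = m`) and `p²` off it. After scaling by `1/p`, the mean and the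
off-diagonal part of the second moment agree with the test phase, while the diagonal part is
inflated by `1/p`; the two variances thus differ by `(1/p - 1) Σ_j w_j² E[x_j²] > 0`.
-/

open MeasureTheory ProbabilityTheory Finset

theorem sum_sum_eq_sum_diag_add_sum_offDiag {ι M : Type*} [Fintype ι] [DecidableEq ι]
    [AddCommMonoid M] (F : ι → ι → M) :
    ∑ j, ∑ k, F j k = ∑ j, F j j + ∑ j, ∑ k ∈ univ \ {j}, F j k := by
  rw [← sum_add_distrib]
  exact sum_congr rfl fun j _ => sum_eq_add_sum_sdiff_singleton_of_mem (mem_univ j) _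

theorem sum_sum_ite_mul_eq_diag_add_offDiag {ι R : Type*} [Fintype ι] [DecidableEq ι]
    [CommSemiring R] (a b : R) (F : ι → ι → R) :
    ∑ j, ∑ k, (if j = k then a else b) * F j k
      = a * ∑ j, F j j + b * ∑ j, ∑ k ∈ univ \ {j}, F j k := by
  rw [sum_sum_eq_sum_diag_add_sum_offDiag, mul_sum, mul_sum]
  congr 1
  · simp
  · refine sum_congr rfl fun j _ => ?_
    rw [mul_sum]
    refine sum_congr rfl fun k hk => ?_
    rw [if_neg (by simpa [eq_comm] using hk)]

theorem integral_sq_sum {Ω ι : Type*} [MeasurableSpace Ω] {μ : Measure Ω} [Fintype ι]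
    {f : ι → Ω → ℝ} (hf : ∀ j, MemLp (f j) 2 μ) :
    ∫ ω, (∑ j, f j ω) ^ 2 ∂μ = ∑ j, ∑ k, ∫ ω, f j ω * f k ω ∂μ := by
  have hint : ∀ j k, Integrable (fun ω => f j ω * f k ω) μ := fun j k =>
    (hf j).integrable_mul (hf k)
  simp_rw [sq, sum_mul_sum]
  rw [integral_finsetSum _ fun j _ => integrable_finsetSum _ fun k _ => hint j k]
  exact sum_congr rfl fun j _ => integral_finsetSum _ fun k _ => hint j k

section Bernoulli

variable {Ω : Type*} [MeasurableSpace Ω] {μ : Measure Ω} {p : ℝ} {m : Ω → ℝ}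

theorem IsBernoulli.mul_self (h : IsBernoulli μ p m) (ω : Ω) : m ω * m ω = m ω := by
  rcases h.2.1 ω with h0 | h1 <;> simp [*]

theorem IsBernoulli.memLp_top (h : IsBernoulli μ p m) : MemLp m ⊤ μ :=
  memLp_top_of_bound h.1.aestronglyMeasurable 1 <| .of_forall fun ω => by
    rcases h.2.1 ω with h0 | h1 <;> simp [*]

theorem IsBernoulli.integral_eq_s16 (hp : 0 ≤ p) (h : IsBernoulli μ p m) :
    ∫ ω, m ω ∂μ = p := by
  have hs : MeasurableSet {ω | m ω = 1} := h.1 (measurableSet_singleton 1)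
  calc ∫ ω, m ω ∂μ = ∫ ω, {ω | m ω = 1}.indicator 1 ω ∂μ :=
        integral_congr_ae <| .of_forall fun ω => by rcases h.2.1 ω with h0 | h1 <;> simp [*]
    _ = p := by rw [integral_indicator_one hs, measureReal_def, h.2.2, ENNReal.toReal_ofReal hp]

end Bernoulli

section Dropout

variable {Ω ι : Type*} [MeasurableSpace Ω] {μ : Measure Ω}
  {p : ℝ} {m : ι → Ω → ℝ} {x : Ω → ι → ℝ}

theorem integral_mask_mul_mask [DecidableEq ι] (hp : 0 ≤ p) (hmB : ∀ j, IsBernoulli μ p (m j))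
    (hmiid : iIndepFun m μ) (j k : ι) :
    ∫ ω, m j ω * m k ω ∂μ = if j = k then p else p ^ 2 := by
  split_ifs with hjk
  · subst hjk
    simp_rw [(hmB j).mul_self]
    exact (hmB j).integral_eq_s16 hp
  · rw [(hmiid.indepFun hjk).integral_fun_mul_eq_mul_integral (hmB j).1.aestronglyMeasurable
      (hmB k).1.aestronglyMeasurable, (hmB j).integral_eq_s16 hp, (hmB k).integral_eq_s16 hp, sq]

theorem integral_masked_mul_masked [DecidableEq ι] (hp : 0 ≤ p)
    (hmB : ∀ j, IsBernoulli μ p (m j)) (hmiid : iIndepFun m μ) (hxmeas : Measurable x)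
    (hmx : IndepFun (fun ω j => m j ω) x μ) (w : ι → ℝ) (j k : ι) :
    ∫ ω, (m j ω * w j * x ω j) * (m k ω * w k * x ω k) ∂μ
      = (if j = k then p else p ^ 2) * (w j * w k * ∫ ω, x ω j * x ω k ∂μ) := by
  have hM : Measurable fun ω j => m j ω := measurable_pi_lambda _ fun j => (hmB j).1
  have hφ : Measurable fun v : ι → ℝ => v j * v k := by fun_prop
  have hψ : Measurable fun v : ι → ℝ => w j * w k * (v j * v k) := by fun_prop
  calc ∫ ω, (m j ω * w j * x ω j) * (m k ω * w k * x ω k) ∂μ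
      = ∫ ω, m j ω * m k ω * (w j * w k * (x ω j * x ω k)) ∂μ := by congr with ω; ring
    _ = (∫ ω, m j ω * m k ω ∂μ) * ∫ ω, w j * w k * (x ω j * x ω k) ∂μ :=
      hmx.integral_fun_comp_mul_comp (f := fun v => v j * v k)
        (g := fun v => w j * w k * (v j * v k)) hM.aemeasurable hxmeas.aemeasurable
        hφ.aestronglyMeasurable hψ.aestronglyMeasurable
    _ = _ := by rw [integral_mask_mul_mask hp hmB hmiid, integral_const_mul]

theorem integral_masked (hp : 0 ≤ p) (hmB : ∀ j, IsBernoulli μ p (m j))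
    (hxmeas : Measurable x) (hmx : IndepFun (fun ω j => m j ω) x μ) (w : ι → ℝ) (j : ι) :
    ∫ ω, m j ω * w j * x ω j ∂μ = p * (w j * ∫ ω, x ω j ∂μ) := by
  have hM : Measurable fun ω j => m j ω := measurable_pi_lambda _ fun j => (hmB j).1
  calc ∫ ω, m j ω * w j * x ω j ∂μ = ∫ ω, m j ω * (w j * x ω j) ∂μ := by
        congr with ω; ring
    _ = (∫ ω, m j ω ∂μ) * ∫ ω, w j * x ω j ∂μ :=
      hmx.integral_fun_comp_mul_comp (f := fun v => v j) (g := fun v => w j * v j)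
        hM.aemeasurable hxmeas.aemeasurable (measurable_pi_apply j).aestronglyMeasurable
        (measurable_const.mul (measurable_pi_apply j)).aestronglyMeasurable
    _ = _ := by rw [(hmB j).integral_eq_s16 hp, integral_const_mul]

theorem memLp_masked (hmB : ∀ j, IsBernoulli μ p (m j))
    (hx : ∀ j, MemLp (fun ω => x ω j) 2 μ) (w : ι → ℝ) (j : ι) :
    MemLp (fun ω => m j ω * w j * x ω j) 2 μ := by
  simpa only [mul_assoc] using ((hx j).const_mul (w j)).mul' (hmB j).memLp_top

end Dropout

section Variance

variable {Ω ι : Type*} [MeasurableSpace Ω] {μ : Measure Ω} [Fintype ι] [DecidableEq ι]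
  {p : ℝ} {m : ι → Ω → ℝ} {x : Ω → ι → ℝ}

theorem integral_weighted_sum_sq (hx : ∀ j, MemLp (fun ω => x ω j) 2 μ) (w : ι → ℝ) :
    ∫ ω, (∑ j, w j * x ω j) ^ 2 ∂μ
      = ∑ j, w j ^ 2 * ∫ ω, x ω j ^ 2 ∂μ
        + ∑ j, ∑ k ∈ univ \ {j}, w j * w k * ∫ ω, x ω j * x ω k ∂μ := by
  rw [integral_sq_sum fun j => (hx j).const_mul (w j), sum_sum_eq_sum_diag_add_sum_offDiag]
  have hterm : ∀ j k, ∫ ω, w j * x ω j * (w k * x ω k) ∂μ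
      = w j * w k * ∫ ω, x ω j * x ω k ∂μ := fun j k => by
    rw [← integral_const_mul]
    congr with ω
    ring
  simp_rw [hterm, ← sq]

theorem integral_dropout_sum_sq (hp : 0 < p) (hmB : ∀ j, IsBernoulli μ p (m j))
    (hmiid : iIndepFun m μ) (hx : ∀ j, MemLp (fun ω => x ω j) 2 μ) (hxmeas : Measurable x)
    (hmx : IndepFun (fun ω j => m j ω) x μ) (w : ι → ℝ) :
    ∫ ω, ((1 / p) * ∑ j, m j ω * w j * x ω j) ^ 2 ∂μ
      = (1 / p) * ∑ j, w j ^ 2 * ∫ ω, x ω j ^ 2 ∂μ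
        + ∑ j, ∑ k ∈ univ \ {j}, w j * w k * ∫ ω, x ω j * x ω k ∂μ := by
  simp_rw [mul_pow]
  rw [integral_const_mul, integral_sq_sum (memLp_masked hmB hx w)]
  simp_rw [integral_masked_mul_masked hp.le hmB hmiid hxmeas hmx]
  rw [sum_sum_ite_mul_eq_diag_add_offDiag]
  simp_rw [← sq]
  field_simp

theorem variance_weighted_sum [IsProbabilityMeasure μ] (hx : ∀ j, MemLp (fun ω => x ω j) 2 μ)
    (w : ι → ℝ) :
    variance (fun ω => ∑ j, w j * x ω j) μ
      = ∑ j, w j ^ 2 * ∫ ω, x ω j ^ 2 ∂μ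
        + ∑ j, ∑ k ∈ univ \ {j}, w j * w k * ∫ ω, x ω j * x ω k ∂μ
        - (∑ j, w j * ∫ ω, x ω j ∂μ) ^ 2 := by
  have hmean : ∫ ω, ∑ j, w j * x ω j ∂μ = ∑ j, w j * ∫ ω, x ω j ∂μ := by
    rw [integral_finsetSum _ fun j _ => ((hx j).const_mul (w j)).integrable one_le_two]
    simp_rw [integral_const_mul]
  rw [variance_eq_sub (memLp_finsetSum _ fun j _ => (hx j).const_mul (w j))]
  simp only [Pi.pow_apply]
  rw [integral_weighted_sum_sq hx, hmean]

theorem variance_dropout_sum [IsProbabilityMeasure μ] (hp : 0 < p)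
    (hmB : ∀ j, IsBernoulli μ p (m j)) (hmiid : iIndepFun m μ)
    (hx : ∀ j, MemLp (fun ω => x ω j) 2 μ) (hxmeas : Measurable x)
    (hmx : IndepFun (fun ω j => m j ω) x μ) (w : ι → ℝ) :
    variance (fun ω => (1 / p) * ∑ j, m j ω * w j * x ω j) μ
      = (1 / p) * ∑ j, w j ^ 2 * ∫ ω, x ω j ^ 2 ∂μ
        + ∑ j, ∑ k ∈ univ \ {j}, w j * w k * ∫ ω, x ω j * x ω k ∂μ
        - (∑ j, w j * ∫ ω, x ω j ∂μ) ^ 2 := by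
  have hmean :
      ∫ ω, (1 / p) * ∑ j, m j ω * w j * x ω j ∂μ = ∑ j, w j * ∫ ω, x ω j ∂μ := by
    rw [integral_const_mul, integral_finsetSum _ fun j _ =>
      (memLp_masked hmB hx w j).integrable one_le_two]
    simp_rw [integral_masked hp.le hmB hxmeas hmx, ← mul_sum]
    field_simp
  rw [variance_eq_sub ((memLp_finsetSum _ fun j _ => memLp_masked hmB hx w j).const_mul _)]
  simp only [Pi.pow_apply]
  rw [integral_dropout_sum_sq hp hmB hmiid hx hxmeas hmx, hmean]

end Variance

/-- PreDropout variance formula and inconsistency: with independent Bernoulli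
masks `m_j` on the inputs, `Var[(1/p) Σ_j m_j w_j x_j] = (1/p) Σ_j w_j² E[x_j²]
+ Σ_{j≠k} w_j w_k E[x_j x_k] − (Σ_j w_j E[x_j])²`, and if `Σ_j w_j² E[x_j²] > 0`
and `p < 1` this exceeds the test-phase variance `Var[Σ_j w_j x_j]`, so the
PreDropout inconsistency ratio is `< 1`. -/
theorem preDropout_variance_formula {Ω : Type*} [MeasurableSpace Ω]
    (μ : Measure Ω) [IsProbabilityMeasure μ] (n : ℕ) (p : ℝ)
    (hp0 : 0 < p) (hp1 : p < 1)
    (x : Ω → Fin n → ℝ) (hx : ∀ j, MemLp (fun ω => x ω j) 2 μ)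
    (hxmeas : Measurable x)
    (m : Fin n → Ω → ℝ) (hmB : ∀ j, IsBernoulli μ p (m j))
    (hmiid : iIndepFun m μ)
    (hmx : IndepFun (fun ω j => m j ω) x μ)
    (w : Fin n → ℝ)
    (hpos : 0 < ∑ j, w j ^ 2 * ∫ ω, (x ω j) ^ 2 ∂μ) :
    variance (fun ω => (1 / p) * ∑ j, m j ω * w j * x ω j) μ
        = (1 / p) * (∑ j, w j ^ 2 * ∫ ω, (x ω j) ^ 2 ∂μ)
          + (∑ j, ∑ k ∈ univ \ {j}, w j * w k * ∫ ω, x ω j * x ω k ∂μ)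
          - (∑ j, w j * ∫ ω, x ω j ∂μ) ^ 2 ∧
      variance (fun ω => ∑ j, w j * x ω j) μ
        < variance (fun ω => (1 / p) * ∑ j, m j ω * w j * x ω j) μ ∧
      variance (fun ω => ∑ j, w j * x ω j) μ
          / variance (fun ω => (1 / p) * ∑ j, m j ω * w j * x ω j) μ < 1 := by
  have hdropout := variance_dropout_sum hp0 hmB hmiid hx hxmeas hmx w
  have hlt : variance (fun ω => ∑ j, w j * x ω j) μ
      < variance (fun ω => (1 / p) * ∑ j, m j ω * w j * x ω j) μ := by
    rw [hdropout, variance_weighted_sum hx w]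
    nlinarith [one_lt_one_div hp0 hp1]
  exact ⟨hdropout, hlt, (div_lt_one ((variance_nonneg _ _).trans_lt hlt)).2 hlt⟩
end
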